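/- Let 2 ≤ p < ∞ and let x_1,…,x_n, y_1,…,y_n ∈ ℓ_p. Then Σ_{i=1}^n Σ_{j=1}^n ( ‖x_i − x_j‖_p^p + ‖y_i − y_j‖_p^p ) ≤ 2^{p−1} · Σ_{i=1}^n Σ_{j=1}^n ‖x_i − y_j‖_p^p. -/

import Mathlib

/-!
The inequality holds coordinatewise, so it suffices to prove it for reals `a i`, `b j` and sum
over the coordinates. Put `u (i, k) = a i - b k`. Averaging the reverse Clarkson inequality
`2 (|s| ^ p + |t| ^ p) ≤ |s + t| ^ p + |s - t| ^ p` over `s = a i - a j`, `t = ±(b k - b l)`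
bounds `n² (∑ |a i - a j| ^ p + ∑ |b i - b j| ^ p)` by `∑_{z,w} |u z - u w| ^ p`. The latter
is at most `2 ^ (p - 1) n² ∑ |u z| ^ p`: the Mazur map `φ s = sign s * |s| ^ (p / 2)` satisfies
`|s - t| ^ p ≤ 2 ^ (p - 2) (φ s - φ t)²`, and for squares
`∑_{z,w} (v z - v w)² = 2N ∑ (v z)² - 2 (∑ v z)²` gains the factor `2` over the triangle
inequality.
-/

open Finset

namespace Real

lemma rpow_add_le_mul_rpow_add_rpow {a b q : ℝ} (ha : 0 ≤ a) (hb : 0 ≤ b) (hq : 1 ≤ q) :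
    (a + b) ^ q ≤ 2 ^ (q - 1) * (a ^ q + b ^ q) := by
  lift a to NNReal using ha
  lift b to NNReal using hb
  exact_mod_cast NNReal.rpow_add_le_mul_rpow_add_rpow a b hq

lemma rpow_half_sq {x : ℝ} (hx : 0 ≤ x) (p : ℝ) : (x ^ (p / 2)) ^ 2 = x ^ p := by
  rw [← rpow_mul_natCast hx]
  norm_num

lemma two_mul_abs_rpow_add_abs_rpow_le {p : ℝ} (hp : 2 ≤ p) (s t : ℝ) :
    2 * (|s| ^ p + |t| ^ p) ≤ |s + t| ^ p + |s - t| ^ p := by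
  have hq : 1 ≤ p / 2 := by linarith
  set q := p / 2
  have habs (z : ℝ) : |z| ^ p = (z ^ 2) ^ q := by
    rw [← sq_abs z, ← rpow_natCast_mul (abs_nonneg z)]
    congr 1
    push_cast
    ring
  have hconv := rpow_add_le_mul_rpow_add_rpow (sq_nonneg (s + t)) (sq_nonneg (s - t)) hq
  have hsuper := add_rpow_le_rpow_add (sq_nonneg s) (sq_nonneg t) hq
  have hpar : (s + t) ^ 2 + (s - t) ^ 2 = 2 * (s ^ 2 + t ^ 2) := by ring
  have htwo : (2 : ℝ) ^ q = 2 * 2 ^ (q - 1) := by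
    rw [rpow_sub_one two_ne_zero]
    ring
  rw [hpar, mul_rpow zero_le_two (by positivity), htwo] at hconv
  rw [habs s, habs t, habs (s + t), habs (s - t)]
  have hpos : (0 : ℝ) < 2 ^ (q - 1) := by positivity
  nlinarith

noncomputable def signedRpow (q s : ℝ) : ℝ :=
  if 0 ≤ s then s ^ q else -(-s) ^ q

lemma abs_signedRpow (q s : ℝ) : |signedRpow q s| = |s| ^ q := by
  unfold signedRpow
  split_ifs with hs
  · rw [abs_of_nonneg hs, abs_of_nonneg (rpow_nonneg hs q)]
  · rw [abs_neg, abs_of_neg (not_le.1 hs), abs_of_nonneg (rpow_nonneg (by linarith) q)]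

lemma sub_rpow_le_rpow_sub_rpow {a b q : ℝ} (hb : 0 ≤ b) (hba : b ≤ a) (hq : 1 ≤ q) :
    (a - b) ^ q ≤ a ^ q - b ^ q := by
  have := add_rpow_le_rpow_add hb (sub_nonneg.2 hba) hq
  rw [add_sub_cancel] at this
  linarith

lemma abs_sub_rpow_le_abs_signedRpow_sub {q : ℝ} (hq : 1 ≤ q) (s t : ℝ) :
    |s - t| ^ q ≤ 2 ^ (q - 1) * |signedRpow q s - signedRpow q t| := by
  wlog hts : t ≤ s generalizing s t
  · have := this t s (le_of_not_ge hts)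
    rwa [abs_sub_comm, abs_sub_comm (signedRpow q t)] at this
  have hc : 1 ≤ (2 : ℝ) ^ (q - 1) := one_le_rpow one_le_two (by linarith)
  rw [abs_of_nonneg (sub_nonneg.2 hts)]
  rcases le_or_gt 0 t with ht | ht
  · have hs : 0 ≤ s := ht.trans hts
    have h := sub_rpow_le_rpow_sub_rpow ht hts hq
    have h' : 0 ≤ s ^ q - t ^ q := (rpow_nonneg (sub_nonneg.2 hts) q).trans h
    simp only [signedRpow, hs, ht, if_true]
    rw [abs_of_nonneg h']
    exact h.trans (le_mul_of_one_le_left h' hc)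
  · rcases le_or_gt 0 s with hs | hs
    · have h := rpow_add_le_mul_rpow_add_rpow hs (neg_nonneg.2 ht.le) hq
      simp only [signedRpow, hs, not_le.2 ht, if_true, if_false, sub_neg_eq_add]
      rw [← sub_eq_add_neg] at h
      have h' : 0 ≤ s ^ q + (-t) ^ q :=
        add_nonneg (rpow_nonneg hs q) (rpow_nonneg (neg_nonneg.2 ht.le) q)
      rwa [abs_of_nonneg h']
    · have h := sub_rpow_le_rpow_sub_rpow (neg_nonneg.2 hs.le) (neg_le_neg hts) hq
      have h' : 0 ≤ (-t) ^ q - (-s) ^ q := (rpow_nonneg (by linarith) q).trans h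
      simp only [signedRpow, not_le.2 hs, not_le.2 ht, if_false, neg_sub_neg]
      rw [neg_sub_neg] at h
      rw [abs_of_nonneg h']
      exact h.trans (le_mul_of_one_le_left h' hc)

lemma abs_sub_rpow_le_signedRpow_sub_sq {p : ℝ} (hp : 2 ≤ p) (s t : ℝ) :
    |s - t| ^ p ≤ 2 ^ (p - 2) * (signedRpow (p / 2) s - signedRpow (p / 2) t) ^ 2 := by
  have h := pow_le_pow_left₀ (by positivity)
    (abs_sub_rpow_le_abs_signedRpow_sub (by linarith : 1 ≤ p / 2) s t) 2
  rwa [rpow_half_sq (abs_nonneg _), mul_pow, sq_abs, ← rpow_mul_natCast zero_le_two,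
    show (p / 2 - 1) * ((2 : ℕ) : ℝ) = p - 2 by push_cast; ring] at h

end Real

open Real

lemma sum_sum_sub_sq_le {ι : Type*} [Fintype ι] (v : ι → ℝ) :
    ∑ α, ∑ β, (v α - v β) ^ 2 ≤ 2 * Fintype.card ι * ∑ α, v α ^ 2 := by
  have h : ∑ α, ∑ β, (v α - v β) ^ 2 =
      2 * Fintype.card ι * ∑ α, v α ^ 2 - 2 * (∑ α, v α) ^ 2 := by
    simp only [sub_sq, sum_add_distrib, sum_sub_distrib, ← mul_sum, ← sum_mul, sum_const,
      card_univ, nsmul_eq_mul]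
    ring
  rw [h]
  exact sub_le_self _ (by positivity)

lemma sum_sum_abs_sub_rpow_le {ι : Type*} [Fintype ι] {p : ℝ} (hp : 2 ≤ p) (u : ι → ℝ) :
    ∑ α, ∑ β, |u α - u β| ^ p ≤ 2 ^ (p - 1) * Fintype.card ι * ∑ α, |u α| ^ p := by
  set v := fun α => signedRpow (p / 2) (u α)
  have hv (α : ι) : v α ^ 2 = |u α| ^ p := by
    rw [← sq_abs, abs_signedRpow, rpow_half_sq (abs_nonneg _)]
  calc ∑ α, ∑ β, |u α - u β| ^ p ≤ ∑ α, ∑ β, 2 ^ (p - 2) * (v α - v β) ^ 2 := by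
        gcongr with α _ β _
        exact abs_sub_rpow_le_signedRpow_sub_sq hp _ _
    _ = 2 ^ (p - 2) * ∑ α, ∑ β, (v α - v β) ^ 2 := by simp only [mul_sum]
    _ ≤ 2 ^ (p - 2) * (2 * Fintype.card ι * ∑ α, v α ^ 2) := by
        gcongr
        exact sum_sum_sub_sq_le v
    _ = 2 ^ (p - 1) * Fintype.card ι * ∑ α, |u α| ^ p := by
        rw [sum_congr rfl fun α _ => hv α, show p - 1 = p - 2 + 1 by ring,
          rpow_add_one two_ne_zero]
        ring

lemma sq_card_mul_sum_sum_abs_sub_rpow_le {ι : Type*} [Fintype ι] {p : ℝ} (hp : 2 ≤ p)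
    (a b : ι → ℝ) :
    (Fintype.card ι : ℝ) ^ 2 * ∑ i, ∑ j, (|a i - a j| ^ p + |b i - b j| ^ p) ≤
      ∑ z : ι × ι, ∑ w : ι × ι, |(a z.1 - b z.2) - (a w.1 - b w.2)| ^ p := by
  have hsub : ∑ z : ι × ι, ∑ w : ι × ι, |(a z.1 - b z.2) - (a w.1 - b w.2)| ^ p =
      ∑ i, ∑ j, ∑ k, ∑ l, |(a i - a j) - (b k - b l)| ^ p := by
    simp only [Fintype.sum_prod_type]
    refine sum_congr rfl fun i _ => ?_
    rw [sum_comm]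
    refine sum_congr rfl fun j _ => sum_congr rfl fun k _ => sum_congr rfl fun l _ => ?_
    ring_nf
  have hadd : ∑ i, ∑ j, ∑ k, ∑ l, |(a i - a j) + (b k - b l)| ^ p =
      ∑ i, ∑ j, ∑ k, ∑ l, |(a i - a j) - (b k - b l)| ^ p := by
    refine sum_congr rfl fun i _ => sum_congr rfl fun j _ => ?_
    rw [sum_comm]
    refine sum_congr rfl fun k _ => sum_congr rfl fun l _ => ?_
    ring_nf
  have hclarkson : ∑ i, ∑ j, ∑ k, ∑ l, 2 * (|a i - a j| ^ p + |b k - b l| ^ p) ≤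
      ∑ i, ∑ j, ∑ k, ∑ l,
        (|(a i - a j) + (b k - b l)| ^ p + |(a i - a j) - (b k - b l)| ^ p) := by
    gcongr with i _ j _ k _ l _
    exact two_mul_abs_rpow_add_abs_rpow_le hp _ _
  have hconst : ∑ i, ∑ j, ∑ k, ∑ l, 2 * (|a i - a j| ^ p + |b k - b l| ^ p) =
      2 * ((Fintype.card ι : ℝ) ^ 2 * ∑ i, ∑ j, (|a i - a j| ^ p + |b i - b j| ^ p)) := by
    simp only [mul_add, sum_add_distrib, sum_const, card_univ, nsmul_eq_mul, ← mul_sum]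
    ring
  simp only [sum_add_distrib] at hclarkson
  rw [hsub]
  linarith

theorem sum_sum_abs_sub_rpow_add_abs_sub_rpow_le {ι : Type*} [Fintype ι] {p : ℝ} (hp : 2 ≤ p)
    (a b : ι → ℝ) :
    ∑ i, ∑ j, (|a i - a j| ^ p + |b i - b j| ^ p) ≤
      2 ^ (p - 1) * ∑ i, ∑ j, |a i - b j| ^ p := by
  rcases isEmpty_or_nonempty ι with _ | _
  · simp
  have h := (sq_card_mul_sum_sum_abs_sub_rpow_le hp a b).trans
    (sum_sum_abs_sub_rpow_le hp fun z : ι × ι => a z.1 - b z.2)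
  rw [Fintype.card_prod, Fintype.sum_prod_type] at h
  push_cast at h
  refine le_of_mul_le_mul_left (h.trans_eq ?_) (by positivity : (0 : ℝ) < Fintype.card ι ^ 2)
  ring

lemma lp.hasSum_abs_sub_rpow {ι : Type*} {p : ℝ} (hp : 0 < p)
    (f g : lp (fun _ : ι => ℝ) (ENNReal.ofReal p)) :
    HasSum (fun k => |f k - g k| ^ p) (‖f - g‖ ^ p) := by
  have h := lp.hasSum_norm (by rwa [ENNReal.toReal_ofReal hp.le]) (f - g)
  simpa [ENNReal.toReal_ofReal hp.le, Real.norm_eq_abs] using h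

theorem stmt9 (p : ℝ) (hp : 2 ≤ p) (n : ℕ)
    (x y : Fin n → lp (fun _ : ℕ => ℝ) (ENNReal.ofReal p)) :
    ∑ i, ∑ j, (‖x i - x j‖ ^ p + ‖y i - y j‖ ^ p) ≤
      (2 : ℝ) ^ (p - 1) * ∑ i, ∑ j, ‖x i - y j‖ ^ p := by
  have h := lp.hasSum_abs_sub_rpow (ι := ℕ) (by linarith : 0 < p)
  exact hasSum_le
    (fun k => sum_sum_abs_sub_rpow_add_abs_sub_rpow_le hp (fun i => x i k) (fun i => y i k))
    (hasSum_sum fun i _ => hasSum_sum fun j _ => (h _ _).add (h _ _))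
    ((hasSum_sum fun i _ => hasSum_sum fun j _ => h _ _).mul_left _)
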